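/- arXiv:2005.03728 — 5 statements merged into one kernel-verified Lean document; each statement's English description precedes it below -/
import Mathlib

section
/- For positive integers k ≤ n, a real α with 0 ≤ α ≤ 1, and nonnegative reals x_1,…,x_n, the sum over all k-element subsets {i_1<…<i_k} of {1,…,n} of (x_{i_1}+…+x_{i_k})^α is at least C(n-1,k-1)·(x_1+…+x_n)^α. -/
/-!
Write `T = ∑ i, x i` and `t_s = ∑ i ∈ s, x i`. For `0 ≤ t ≤ T` and `α ≤ 1` we have
`t * T ^ α ≤ T * t ^ α`, i.e. `t ^ α ≥ (t / T) * T ^ α`: the power function lies above its chord.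
Summing over the `k`-subsets `s` and double counting (each index lies in `C(n-1, k-1)` of them)
gives `∑ t_s = C(n-1, k-1) * T`, hence the claim after cancelling `T`. When `T = 0` the claim
reduces to `C(n-1, k-1) ≤ C(n, k)`.
-/

open Finset

theorem Finset.card_filter_mem_powersetCard {α : Type*} [DecidableEq α] {t : Finset α} {a : α}
    (ha : a ∈ t) {k : ℕ} (hk : 0 < k) :
    #{s ∈ t.powersetCard k | a ∈ s} = (#t - 1).choose (k - 1) := by
  simpa using card_filter_powersetCard_subset {a} t k (singleton_subset_iff.2 ha) hk

theorem Finset.sum_powersetCard_sum {α β : Type*} [DecidableEq α] [AddCommMonoid β]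
    (t : Finset α) {k : ℕ} (hk : 0 < k) (f : α → β) :
    ∑ s ∈ t.powersetCard k, ∑ i ∈ s, f i = (#t - 1).choose (k - 1) • ∑ i ∈ t, f i := by
  rw [sum_comm' (t' := t) (s' := fun i ↦ {s ∈ t.powersetCard k | i ∈ s})]
  · rw [smul_sum]
    refine sum_congr rfl fun i hi ↦ ?_
    rw [sum_const, card_filter_mem_powersetCard hi hk]
  · intro s i
    rw [mem_filter]
    exact ⟨fun h ↦ ⟨h, (mem_powersetCard.1 h.1).1 h.2⟩, And.left⟩

theorem Real.mul_rpow_le_mul_rpow_of_le {s t α : ℝ} (hs : 0 ≤ s) (hst : s ≤ t) (hα : α ≤ 1) :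
    s * t ^ α ≤ t * s ^ α := by
  rcases (hs.trans hst).eq_or_lt with rfl | ht
  · simp [le_antisymm hst hs]
  have hchord : s / t ≤ s ^ α / t ^ α := by
    rw [← div_rpow hs ht.le]
    exact self_le_rpow_of_le_one (div_nonneg hs ht.le) ((div_le_one ht).2 hst) hα
  rw [div_le_div_iff₀ ht (rpow_pos_of_pos ht α)] at hchord
  linarith

theorem stmt0_general (n k : ℕ) (hk : 0 < k) (hkn : k ≤ n) (α : ℝ) (hα1 : α ≤ 1)
    (x : Fin n → ℝ) (hx : ∀ i, 0 ≤ x i) :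
    ((n - 1).choose (k - 1) : ℝ) * (∑ i, x i) ^ α ≤
      ∑ s ∈ Finset.powersetCard k (Finset.univ : Finset (Fin n)), (∑ i ∈ s, x i) ^ α := by
  set T := ∑ i, x i
  have hT : 0 ≤ T := sum_nonneg fun i _ ↦ hx i
  have hdouble : T * ((n - 1).choose (k - 1) * T ^ α) ≤
      T * ∑ s ∈ powersetCard k univ, (∑ i ∈ s, x i) ^ α := calc
    T * ((n - 1).choose (k - 1) * T ^ α)
        = (∑ s ∈ powersetCard k univ, ∑ i ∈ s, x i) * T ^ α := by
      rw [sum_powersetCard_sum _ hk, nsmul_eq_mul, card_univ, Fintype.card_fin]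
      ring
    _ ≤ ∑ s ∈ powersetCard k univ, T * (∑ i ∈ s, x i) ^ α := by
      rw [sum_mul]
      exact sum_le_sum fun s _ ↦ Real.mul_rpow_le_mul_rpow_of_le (sum_nonneg fun i _ ↦ hx i)
        (sum_le_univ_sum_of_nonneg hx) hα1
    _ = T * ∑ s ∈ powersetCard k univ, (∑ i ∈ s, x i) ^ α := (mul_sum ..).symm
  rcases hT.eq_or_lt with hT0 | hTpos
  · have hx0 : ∀ i, x i = 0 := fun i ↦
      (sum_eq_zero_iff_of_nonneg fun i _ ↦ hx i).1 hT0.symm i (mem_univ i)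
    have hchoose : (n - 1).choose (k - 1) ≤ n.choose k := by
      rw [Nat.choose_eq_choose_pred_add (hk.trans_le hkn) hk]
      exact Nat.le_add_right _ _
    simp only [T, hx0, sum_const_zero, sum_const, card_powersetCard, card_univ, Fintype.card_fin,
      nsmul_eq_mul]
    exact mul_le_mul_of_nonneg_right (by exact_mod_cast hchoose) (Real.rpow_nonneg le_rfl α)
  · exact le_of_mul_le_mul_left hdouble hTpos

theorem stmt0 (n k : ℕ) (hk : 0 < k) (hkn : k ≤ n) (α : ℝ) (hα0 : 0 ≤ α) (hα1 : α ≤ 1)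
    (x : Fin n → ℝ) (hx : ∀ i, 0 ≤ x i) :
    ((n - 1).choose (k - 1) : ℝ) * (∑ i, x i) ^ α ≤
      ∑ s ∈ Finset.powersetCard k (Finset.univ : Finset (Fin n)), (∑ i ∈ s, x i) ^ α :=
  stmt0_general n k hk hkn α hα1 x hx
end

section
/- Let (X,μ) be a probability space with a measurable involution x ↦ −x satisfying μ(−A) = μ(A) for all measurable A. Let (E,‖·‖) be a normed space, p ≥ 1, v ∈ E^n. Suppose f, φ ∈ L^p(X,μ) with μ(supp f ∩ supp φ) = 0 and φ(−x) = −φ(x) a.e., and with supp φ symmetric (i.e. −supp φ = supp φ up to null sets). Then I_p(v, f+φ) ≥ I_p(v, f), where I_p(v,g) = (∫_{X^n} ‖Σ_i g(x_i) v_i‖^p dμ^n)^{1/p}. -/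
/-!
Let `T` be `x ↦ -x` on `supp φ` and the identity elsewhere. Since `supp φ` is symmetric up to a
null set, `T` preserves `μ`, and since `φ` is odd and `f` vanishes on `supp φ`, it carries
`f + φ` to `f - φ` almost everywhere. Applying `T` in every coordinate of `X^n` therefore gives
`I_p(v, f + φ) = I_p(v, f - φ)`, and convexity of `‖·‖^p` at the midpoint of the two sums
`∑ (f ± φ)(xᵢ) vᵢ` yields
`I_p(v, f)^p ≤ (I_p(v, f + φ)^p + I_p(v, f - φ)^p) / 2 = I_p(v, f + φ)^p`.
-/

open MeasureTheory

section Reflection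

variable {X : Type*} [MeasurableSpace X] {μ : Measure X} {neg : X → X}

theorem MeasureTheory.MeasurePreserving.piecewise_id
    (hneg : MeasurePreserving neg μ μ) {A : Set X} [DecidablePred (· ∈ A)]
    (hA : MeasurableSet A) (hAneg : neg ⁻¹' A =ᵐ[μ] A) :
    MeasurePreserving (A.piecewise neg id) μ μ := by
  have hm : Measurable (A.piecewise neg id) := hneg.measurable.piecewise hA measurable_id
  refine ⟨hm, Measure.ext fun s hs => ?_⟩
  have hpre : A.piecewise neg id ⁻¹' s = (A ∩ neg ⁻¹' s) ∪ (Aᶜ ∩ s) := by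
    ext x; by_cases hx : x ∈ A <;> simp [hx]
  have hflip : (A ∩ neg ⁻¹' s : Set X) =ᵐ[μ] neg ⁻¹' (A ∩ s) := by
    rw [Set.preimage_inter]
    exact hAneg.symm.inter (Filter.EventuallyEq.refl _ _)
  rw [Measure.map_apply hm hs, hpre,
    measure_union (disjoint_compl_right.mono Set.inter_subset_left Set.inter_subset_left)
      (hA.compl.inter hs),
    measure_congr hflip, hneg.measure_preimage (hA.inter hs).nullMeasurableSet,
    Set.inter_comm A s, Set.inter_comm Aᶜ s, ← Set.sdiff_eq]
  exact measure_inter_add_sdiff s hA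

theorem add_comp_piecewise_ae_eq_sub {G : Type*} [AddGroup G]
    (hneg : Measure.QuasiMeasurePreserving neg μ μ) {f φ : X → G}
    [DecidablePred (· ∈ Function.support φ)]
    (hsupp : μ (Function.support f ∩ Function.support φ) = 0)
    (hodd : ∀ᵐ x ∂μ, φ (neg x) = -φ x) :
    (f + φ) ∘ (Function.support φ).piecewise neg id =ᵐ[μ] f - φ := by
  have hdisj : ∀ᵐ x ∂μ, φ x ≠ 0 → f x = 0 := by
    rw [ae_iff]
    convert hsupp using 2
    ext x
    simp [and_comm]
  filter_upwards [hodd, hdisj, hneg.tendsto_ae.eventually hdisj] with x hodd_x hdisj_x hdisj_negx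
  by_cases hx : φ x = 0
  · simp [hx]
  · have hx' : x ∈ Function.support φ := hx
    simp [hx', hodd_x, hdisj_x hx, hdisj_negx (by simpa [hodd_x] using hx)]

end Reflection

theorem integral_comp_pi_eq_of_comp_ae_eq {X Y G ι : Type*} [MeasurableSpace X]
    [NormedAddCommGroup G] [NormedSpace ℝ G] [Fintype ι] {μ : Measure X} [SigmaFinite μ]
    {T : X → X} (hT : MeasurePreserving T μ μ) {g h : X → Y} (hgh : g ∘ T =ᵐ[μ] h)
    {F : (ι → Y) → G}
    (hF : AEStronglyMeasurable (fun y : ι → X => F (g ∘ y)) (Measure.pi fun _ => μ)) :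
    ∫ y, F (h ∘ y) ∂(Measure.pi fun _ => μ) =
      ∫ y, F (g ∘ y) ∂(Measure.pi fun _ => μ) := by
  have hTpi : MeasurePreserving (fun y : ι → X => T ∘ y) (Measure.pi fun _ => μ)
      (Measure.pi fun _ => μ) := measurePreserving_pi (fun _ : ι => μ) _ fun _ => hT
  have hcoord : ∀ᵐ y : ι → X ∂(Measure.pi fun _ => μ), ∀ i, g (T (y i)) = h (y i) :=
    ae_all_iff.2 fun i =>
      (Measure.tendsto_eval_ae_ae (μ := fun _ : ι => μ) (i := i)).eventually
        (p := fun x => g (T x) = h x) hgh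
  calc ∫ y, F (h ∘ y) ∂(Measure.pi fun _ => μ)
      = ∫ y, F (g ∘ T ∘ y) ∂(Measure.pi fun _ => μ) :=
        integral_congr_ae (hcoord.mono fun y hy => congrArg F (funext hy).symm)
    _ = ∫ y, F (g ∘ y) ∂(Measure.pi fun _ => μ) := by
        conv_rhs => rw [← hTpi.map_eq]
        exact (integral_map hTpi.measurable.aemeasurable (hTpi.map_eq ▸ hF)).symm

theorem MeasureTheory.MemLp.integrable_norm_sum_smul_rpow {X E ι : Type*} [MeasurableSpace X]
    [NormedAddCommGroup E] [NormedSpace ℝ E] [Fintype ι] {μ : Measure X}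
    [IsProbabilityMeasure μ] {p : ℝ} (hp : 0 < p) {g : X → ℝ}
    (hg : MemLp g (ENNReal.ofReal p) μ) (v : ι → E) :
    Integrable (fun y : ι → X => ‖∑ i, g (y i) • v i‖ ^ p) (Measure.pi fun _ => μ) := by
  have hsum : MemLp (fun y : ι → X => ∑ i, g (y i) • v i) (ENNReal.ofReal p)
      (Measure.pi fun _ => μ) :=
    memLp_finsetSum _ fun i _ =>
      ((memLp_top_const (v i)).smul hg).comp_measurePreserving (measurePreserving_eval _ i)
  simpa [ENNReal.toReal_ofReal hp.le] using
    hsum.integrable_norm_rpow (by simpa using hp) ENNReal.ofReal_ne_top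

theorem norm_rpow_le_add_norm_add_rpow_norm_sub_div_two {E : Type*} [NormedAddCommGroup E]
    [NormedSpace ℝ E] {p : ℝ} (hp : 1 ≤ p) (x y : E) :
    ‖x‖ ^ p ≤ (‖x + y‖ ^ p + ‖x - y‖ ^ p) / 2 := by
  have htri : ‖x‖ ≤ (1 / 2 : ℝ) • ‖x + y‖ + (1 / 2 : ℝ) • ‖x - y‖ := by
    calc ‖x‖ = ‖(1 / 2 : ℝ) • ((x + y) + (x - y))‖ := by congr 1; module
      _ ≤ (1 / 2 : ℝ) * (‖x + y‖ + ‖x - y‖) := by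
          rw [norm_smul, Real.norm_of_nonneg (by norm_num)]
          gcongr
          exact norm_add_le _ _
      _ = _ := by simp only [smul_eq_mul]; ring
  calc ‖x‖ ^ p ≤ ((1 / 2 : ℝ) • ‖x + y‖ + (1 / 2 : ℝ) • ‖x - y‖) ^ p := by gcongr
    _ ≤ (1 / 2 : ℝ) • ‖x + y‖ ^ p + (1 / 2 : ℝ) • ‖x - y‖ ^ p :=
        (convexOn_rpow hp).2 (norm_nonneg _) (norm_nonneg _) (by norm_num) (by norm_num)
          (by norm_num)
    _ = _ := by simp only [smul_eq_mul]; ring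

theorem integral_norm_rpow_le_of_integral_norm_sub_rpow_eq {Ω E : Type*} [MeasurableSpace Ω]
    [NormedAddCommGroup E] [NormedSpace ℝ E] {ν : Measure Ω} {p : ℝ} (hp : 1 ≤ p) {u w : Ω → E}
    (hadd : Integrable (fun y => ‖u y + w y‖ ^ p) ν)
    (hsub : Integrable (fun y => ‖u y - w y‖ ^ p) ν)
    (heq : ∫ y, ‖u y - w y‖ ^ p ∂ν = ∫ y, ‖u y + w y‖ ^ p ∂ν) :
    ∫ y, ‖u y‖ ^ p ∂ν ≤ ∫ y, ‖u y + w y‖ ^ p ∂ν := by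
  calc ∫ y, ‖u y‖ ^ p ∂ν ≤ ∫ y, (‖u y + w y‖ ^ p + ‖u y - w y‖ ^ p) / 2 ∂ν :=
        integral_mono_of_nonneg (.of_forall fun _ => by positivity)
          ((hadd.add hsub).div_const 2)
          (.of_forall fun y => norm_rpow_le_add_norm_add_rpow_norm_sub_div_two hp _ _)
    _ = ∫ y, ‖u y + w y‖ ^ p ∂ν := by
        rw [integral_div, integral_add hadd hsub, heq]; ring

theorem stmt8_general {X : Type*} [MeasurableSpace X] (μ : Measure X) [IsProbabilityMeasure μ]
    (neg : X → X) (hneg_mp : MeasurePreserving neg μ μ)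
    {E : Type*} [NormedAddCommGroup E] [NormedSpace ℝ E]
    (n : ℕ) (v : Fin n → E) (p : ℝ) (hp : 1 ≤ p)
    (f φ : X → ℝ) (hφm : Measurable φ)
    (hf : MemLp f (ENNReal.ofReal p) μ) (hφ : MemLp φ (ENNReal.ofReal p) μ)
    (hsupp : μ (Function.support f ∩ Function.support φ) = 0)
    (hodd : ∀ᵐ x ∂μ, φ (neg x) = -φ x)
    (hsym : μ (symmDiff (neg ⁻¹' Function.support φ) (Function.support φ)) = 0) :
    (∫ x : Fin n → X, ‖∑ i, f (x i) • v i‖ ^ p ∂(Measure.pi fun _ => μ)) ^ (1 / p) ≤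
      (∫ x : Fin n → X, ‖∑ i, (f (x i) + φ (x i)) • v i‖ ^ p ∂(Measure.pi fun _ => μ)) ^ (1 / p) := by
  classical
  have hp0 : 0 < p := zero_lt_one.trans_le hp
  have hT := hneg_mp.piecewise_id (hφm (measurableSet_singleton 0).compl)
    (measure_symmDiff_eq_zero_iff.mp hsym)
  have hadd := (hf.add hφ).integrable_norm_sum_smul_rpow hp0 v
  have hsub := (hf.sub hφ).integrable_norm_sum_smul_rpow hp0 v
  have hflip := integral_comp_pi_eq_of_comp_ae_eq hT
    (add_comp_piecewise_ae_eq_sub hneg_mp.quasiMeasurePreserving hsupp hodd)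
    (F := fun z => ‖∑ i, z i • v i‖ ^ p) hadd.aestronglyMeasurable
  simp only [Pi.add_apply, Pi.sub_apply, Function.comp_apply, add_smul, sub_smul,
    Finset.sum_add_distrib, Finset.sum_sub_distrib] at hadd hsub hflip ⊢
  exact Real.rpow_le_rpow (integral_nonneg fun _ => by positivity)
    (integral_norm_rpow_le_of_integral_norm_sub_rpow_eq hp hadd hsub hflip) (by positivity)

theorem stmt8 {X : Type*} [MeasurableSpace X] (μ : Measure X) [IsProbabilityMeasure μ]
    (neg : X → X) (hneg_inv : Function.Involutive neg) (hneg_mp : MeasurePreserving neg μ μ)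
    {E : Type*} [NormedAddCommGroup E] [NormedSpace ℝ E]
    (n : ℕ) (v : Fin n → E) (p : ℝ) (hp : 1 ≤ p)
    (f φ : X → ℝ) (hfm : Measurable f) (hφm : Measurable φ)
    (hf : MemLp f (ENNReal.ofReal p) μ) (hφ : MemLp φ (ENNReal.ofReal p) μ)
    (hsupp : μ (Function.support f ∩ Function.support φ) = 0)
    (hodd : ∀ᵐ x ∂μ, φ (neg x) = -φ x)
    (hsym : μ (symmDiff (neg ⁻¹' Function.support φ) (Function.support φ)) = 0) :
    (∫ x : Fin n → X, ‖∑ i, f (x i) • v i‖ ^ p ∂(Measure.pi fun _ => μ)) ^ (1 / p) ≤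
      (∫ x : Fin n → X, ‖∑ i, (f (x i) + φ (x i)) • v i‖ ^ p ∂(Measure.pi fun _ => μ)) ^ (1 / p) :=
  stmt8_general μ neg hneg_mp n v p hp f φ hφm hf hφ hsupp hodd hsym
end

section
/- Let (X,μ) be a probability space, (E,‖·‖) a normed space, n ≥ 1, p ≥ 1, and f ∈ L^p(X,μ). If f is non-constant almost everywhere (i.e. there exists c ∈ ℝ with μ(f > c) > 0 and μ(f < c) > 0), then v ↦ I_p(v,f) := (∫_{X^n} ‖Σ_{i=1}^n f(x_i) v_i‖^p dμ^n)^{1/p} defines a norm on E^n; in particular I_p(v,f) = 0 implies v = 0. -/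
/-!
The map `v ↦ (x ↦ ∑ i, f (x i) • v i)` is linear from `E^n` to `Lᵖ(μ^n; E)` and `I` is the `Lᵖ`
norm composed with it, so homogeneity and the triangle inequality are those of the `Lᵖ` norm, and
definiteness is injectivity of this map. If `∑ i, f (x i) • v i = 0` for almost every `x`, then
by Fubini some choice of the coordinates other than `j` leaves `f a • v j` equal to a fixed vector
for almost every `a`; since `f` takes values on both sides of some `c` with positive probability,
this forces `v j = 0`.
-/

open MeasureTheory

theorem MeasureTheory.MemLp.norm_toLp_eq_integral_rpow_norm {α E : Type*} [MeasurableSpace α]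
    {μ : Measure α} [NormedAddCommGroup E] {g : α → E} {p : ℝ} (hp : 0 < p)
    (hg : MemLp g (ENNReal.ofReal p) μ) :
    ‖hg.toLp g‖ = (∫ x, ‖g x‖ ^ p ∂μ) ^ (1 / p) := by
  rw [Lp.norm_toLp, hg.eLpNorm_eq_integral_rpow_norm (by simpa using hp) ENNReal.ofReal_ne_top,
    ENNReal.toReal_ofReal hp.le, ENNReal.toReal_ofReal (by positivity), one_div]

theorem MeasureTheory.Measure.exists_ae_insertNth_of_ae_pi {m : ℕ} {α : Fin (m + 1) → Type*}
    [∀ i, MeasurableSpace (α i)] {μ : ∀ i, Measure (α i)} [∀ i, IsProbabilityMeasure (μ i)]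
    {P : (∀ i, α i) → Prop} (h : ∀ᵐ x ∂Measure.pi μ, P x) (j : Fin (m + 1)) :
    ∃ z : ∀ i, α (j.succAbove i), ∀ᵐ a ∂μ j, P (j.insertNth a z) := by
  have h_prod := (measurePreserving_piFinSuccAbove μ j).symm.quasiMeasurePreserving.ae h
  have h_swap := Measure.measurePreserving_swap.quasiMeasurePreserving.ae h_prod
  exact (Measure.ae_ae_of_ae_prod h_swap).exists

theorem eq_zero_of_ae_smul_eq {X E : Type*} [MeasurableSpace X] {μ : Measure X}
    [AddCommGroup E] [Module ℝ E] [NoZeroSMulDivisors ℝ E] {f : X → ℝ}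
    (hnonconst : ∃ c : ℝ, 0 < μ {x | c < f x} ∧ 0 < μ {x | f x < c}) {u w : E}
    (h : ∀ᵐ a ∂μ, f a • u = w) : u = 0 := by
  by_contra hu
  obtain ⟨c, hc_gt, hc_lt⟩ := hnonconst
  obtain ⟨a₁, ha₁, h₁⟩ := ((frequently_ae_mem_iff.2 hc_gt.ne').and_eventually h).exists
  obtain ⟨a₂, ha₂, h₂⟩ := ((frequently_ae_mem_iff.2 hc_lt.ne').and_eventually h).exists
  have : f a₁ = f a₂ := smul_left_injective ℝ hu (h₁.trans h₂.symm)
  exact (lt_trans ha₂ ha₁).ne' this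

section RandomCombination

variable {X ι E : Type*} [Fintype ι] [NormedAddCommGroup E] [NormedSpace ℝ E]

def randomCombination (f : X → ℝ) (v : ι → E) (x : ι → X) : E := ∑ i, f (x i) • v i

theorem randomCombination_add (f : X → ℝ) (v w : ι → E) :
    randomCombination f (v + w) = randomCombination f v + randomCombination f w := by
  funext x
  simp only [randomCombination, Pi.add_apply, smul_add, Finset.sum_add_distrib]

theorem randomCombination_smul (f : X → ℝ) (c : ℝ) (v : ι → E) :
    randomCombination f (c • v) = c • randomCombination f v := by
  funext x
  simp only [randomCombination, Pi.smul_apply, Finset.smul_sum, smul_comm c]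

theorem randomCombination_insertNth {m : ℕ} (f : X → ℝ) (v : Fin (m + 1) → E) (j : Fin (m + 1))
    (a : X) (z : Fin m → X) :
    randomCombination f v (j.insertNth a z) =
      f a • v j + randomCombination f (v ∘ j.succAbove) z := by
  simp [randomCombination, Fin.sum_univ_succAbove _ j]

variable [MeasurableSpace X] {μ : Measure X} [IsProbabilityMeasure μ] {q : ENNReal} {f : X → ℝ}

theorem memLp_randomCombination (hf : MemLp f q μ) (v : ι → E) :
    MemLp (randomCombination f v) q (Measure.pi fun _ : ι => μ) :=
  memLp_finsetSum Finset.univ fun i _ =>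
    (memLp_top_const (v i)).smul (hf.comp_measurePreserving (measurePreserving_eval _ i))

noncomputable def randomCombinationLp (hf : MemLp f q μ) :
    (ι → E) →ₗ[ℝ] Lp E q (Measure.pi fun _ : ι => μ) where
  toFun v := (memLp_randomCombination hf v).toLp
  map_add' v w := by
    simp only [randomCombination_add]
    exact MemLp.toLp_add _ _
  map_smul' c v := by
    simp only [randomCombination_smul]
    exact MemLp.toLp_const_smul _ _

theorem eq_zero_of_randomCombination_ae_eq_zero {n : ℕ}
    (hnonconst : ∃ c : ℝ, 0 < μ {x | c < f x} ∧ 0 < μ {x | f x < c}) {v : Fin n → E}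
    (hv : randomCombination f v =ᵐ[Measure.pi fun _ => μ] 0) : v = 0 := by
  funext j
  obtain ⟨m, rfl⟩ := Nat.exists_eq_add_one_of_ne_zero j.pos.ne'
  obtain ⟨z, hz⟩ := Measure.exists_ae_insertNth_of_ae_pi hv j
  refine eq_zero_of_ae_smul_eq hnonconst (w := -randomCombination f (v ∘ j.succAbove) z) ?_
  filter_upwards [hz] with a ha
  rwa [randomCombination_insertNth, Pi.zero_apply, add_eq_zero_iff_eq_neg] at ha

theorem randomCombinationLp_injective (hf : MemLp f q μ)
    (hnonconst : ∃ c : ℝ, 0 < μ {x | c < f x} ∧ 0 < μ {x | f x < c}) {n : ℕ} :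
    Function.Injective (randomCombinationLp (E := E) (ι := Fin n) hf) := by
  refine (injective_iff_map_eq_zero _).2 fun v hv => ?_
  refine eq_zero_of_randomCombination_ae_eq_zero hnonconst ?_
  exact (memLp_randomCombination hf v).coeFn_toLp.symm.trans (Lp.eq_zero_iff_ae_eq_zero.1 hv)

end RandomCombination

theorem stmt12_general {X : Type*} [MeasurableSpace X] (μ : Measure X) [IsProbabilityMeasure μ]
    {E : Type*} [NormedAddCommGroup E] [NormedSpace ℝ E]
    (n : ℕ) (p : ℝ) (hp : 1 ≤ p)
    (f : X → ℝ) (hf : MemLp f (ENNReal.ofReal p) μ)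
    (hnonconst : ∃ c : ℝ, 0 < μ {x | c < f x} ∧ 0 < μ {x | f x < c}) :
    ∀ I : (Fin n → E) → ℝ,
      (∀ v : Fin n → E,
        I v = (∫ x : Fin n → X, ‖∑ i, f (x i) • v i‖ ^ p ∂(Measure.pi fun _ => μ)) ^ (1 / p)) →
      (∀ v : Fin n → E, ∀ c : ℝ, I (c • v) = |c| * I v) ∧
      (∀ v w : Fin n → E, I (v + w) ≤ I v + I w) ∧
      (∀ v : Fin n → E, I v = 0 → v = 0) := by
  intro I hI
  have : Fact (1 ≤ ENNReal.ofReal p) := ⟨ENNReal.one_le_ofReal.2 hp⟩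
  set L := randomCombinationLp (E := E) (ι := Fin n) hf
  have hIL : ∀ v, I v = ‖L v‖ := fun v =>
    (hI v).trans ((memLp_randomCombination hf v).norm_toLp_eq_integral_rpow_norm
      (zero_lt_one.trans_le hp)).symm
  refine ⟨fun v c => ?_, fun v w => ?_, fun v hv => ?_⟩
  · rw [hIL, hIL, map_smul, norm_smul, Real.norm_eq_abs]
  · simpa only [hIL, map_add] using norm_add_le (L v) (L w)
  · exact randomCombinationLp_injective hf hnonconst (by rw [map_zero, ← norm_eq_zero, ← hIL, hv])

theorem stmt12 {X : Type*} [MeasurableSpace X] (μ : Measure X) [IsProbabilityMeasure μ]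
    {E : Type*} [NormedAddCommGroup E] [NormedSpace ℝ E]
    (n : ℕ) (hn : 0 < n) (p : ℝ) (hp : 1 ≤ p)
    (f : X → ℝ) (hfm : Measurable f) (hf : MemLp f (ENNReal.ofReal p) μ)
    (hnonconst : ∃ c : ℝ, 0 < μ {x | c < f x} ∧ 0 < μ {x | f x < c}) :
    ∀ I : (Fin n → E) → ℝ,
      (∀ v : Fin n → E,
        I v = (∫ x : Fin n → X, ‖∑ i, f (x i) • v i‖ ^ p ∂(Measure.pi fun _ => μ)) ^ (1 / p)) →
      (∀ v : Fin n → E, ∀ c : ℝ, I (c • v) = |c| * I v) ∧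
      (∀ v w : Fin n → E, I (v + w) ≤ I v + I w) ∧
      (∀ v : Fin n → E, I v = 0 → v = 0) :=
  stmt12_general μ n p hp f hf hnonconst
end

section
/- Let (X,μ) be a probability space, (E,‖·‖) a normed space, n ≥ 1, p ≥ 1, and v = (v_1,…,v_n) ∈ E^n with Σ_{i=1}^n v_i ≠ 0. Then f ↦ I_p(v,f) := (∫_{X^n} ‖Σ_{i=1}^n f(x_i) v_i‖^p dμ^n)^{1/p} defines a norm on L^p(X,μ); in particular I_p(v,f) = 0 implies f = 0 a.e. -/
/-!
Writing `G_f x = ∑ i, f (x i) • v i`, we have `I_p(v, f) = ‖G_f‖_{L^p(μ^n)}` and `f ↦ G_f` is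
linear, so homogeneity and the triangle inequality are those of the `L^p` norm. For definiteness,
`G_f = 0` a.e. first gives `(∫ f) • ∑ i, v i = 0` by integration, so `∫ f = 0`. Choosing `i₀` with
`v i₀ ≠ 0` and integrating `G_f = 0` over all coordinates but the `i₀`-th then leaves
`f (x i₀) • v i₀ = -(∫ f) • ∑_{i ≠ i₀} v i = 0` for a.e. `x i₀`.
-/

open MeasureTheory

section LpNormAsIntegral

variable {α F : Type*} {m : MeasurableSpace α} {ν : Measure α} [NormedAddCommGroup F] {p : ℝ}

theorem MeasureTheory.MemLp.integral_norm_rpow_rpow_one_div_eq_toReal_eLpNorm (hp : 0 < p)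
    {G : α → F} (hG : MemLp G (ENNReal.ofReal p) ν) :
    (∫ x, ‖G x‖ ^ p ∂ν) ^ (1 / p) = (eLpNorm G (ENNReal.ofReal p) ν).toReal := by
  rw [hG.eLpNorm_eq_integral_rpow_norm (by simpa using hp) ENNReal.ofReal_ne_top,
    ENNReal.toReal_ofReal hp.le, ENNReal.toReal_ofReal (by positivity), one_div]

theorem integral_norm_const_smul_rpow_rpow_one_div [NormedSpace ℝ F] (hp : 0 < p) (c : ℝ)
    (G : α → F) :
    (∫ x, ‖c • G x‖ ^ p ∂ν) ^ (1 / p) = |c| * (∫ x, ‖G x‖ ^ p ∂ν) ^ (1 / p) := by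
  simp_rw [norm_smul, Real.norm_eq_abs, Real.mul_rpow (abs_nonneg c) (norm_nonneg _),
    integral_const_mul]
  rw [Real.mul_rpow (by positivity) (integral_nonneg fun x => by positivity),
    ← Real.rpow_mul (abs_nonneg c), mul_one_div_cancel hp.ne', Real.rpow_one]

theorem integral_norm_add_rpow_rpow_one_div_le (hp : 1 ≤ p) {G H : α → F}
    (hG : MemLp G (ENNReal.ofReal p) ν) (hH : MemLp H (ENNReal.ofReal p) ν) :
    (∫ x, ‖G x + H x‖ ^ p ∂ν) ^ (1 / p)
      ≤ (∫ x, ‖G x‖ ^ p ∂ν) ^ (1 / p) + (∫ x, ‖H x‖ ^ p ∂ν) ^ (1 / p) := by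
  have hp0 : 0 < p := by linarith
  have hGH := (hG.add hH).integral_norm_rpow_rpow_one_div_eq_toReal_eLpNorm hp0
  simp only [Pi.add_apply] at hGH
  rw [hGH, hG.integral_norm_rpow_rpow_one_div_eq_toReal_eLpNorm hp0,
    hH.integral_norm_rpow_rpow_one_div_eq_toReal_eLpNorm hp0,
    ← ENNReal.toReal_add hG.eLpNorm_ne_top hH.eLpNorm_ne_top]
  exact ENNReal.toReal_mono (ENNReal.add_ne_top.2 ⟨hG.eLpNorm_ne_top, hH.eLpNorm_ne_top⟩)
    (eLpNorm_add_le hG.1 hH.1 (ENNReal.one_le_ofReal.2 hp))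

theorem ae_eq_zero_of_integral_norm_rpow_rpow_one_div_eq_zero (hp : 0 < p) {G : α → F}
    (hG : MemLp G (ENNReal.ofReal p) ν) (h : (∫ x, ‖G x‖ ^ p ∂ν) ^ (1 / p) = 0) :
    G =ᵐ[ν] 0 := by
  rw [hG.integral_norm_rpow_rpow_one_div_eq_toReal_eLpNorm hp,
    ENNReal.toReal_eq_zero_iff, or_iff_left hG.eLpNorm_ne_top] at h
  exact (eLpNorm_eq_zero_iff hG.1 (by simpa using hp)).1 h

end LpNormAsIntegral

theorem sum_smul_comp_insertNth {X R E : Type*} [Semiring R] [AddCommMonoid E] [Module R E]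
    {n : ℕ} (f : X → R) (v : Fin (n + 1) → E) (i₀ : Fin (n + 1)) (x₀ : X) (y : Fin n → X) :
    ∑ i, f (Fin.insertNth (α := fun _ => X) i₀ x₀ y i) • v i
      = f x₀ • v i₀ + ∑ j, f (y j) • v (i₀.succAbove j) := by
  simp [Fin.sum_univ_succAbove _ i₀]

theorem ae_eq_neg_integral_of_ae_add_eq_zero {X E : Type*} [MeasurableSpace X] {μ : Measure X}
    [NormedAddCommGroup E] [NormedSpace ℝ E] [CompleteSpace E] {Y : Type*} [MeasurableSpace Y]
    {ν : Measure Y} [IsProbabilityMeasure ν] {h : X → E} {g : Y → E} (hg : Integrable g ν)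
    (hhg : ∀ᵐ z ∂μ.prod ν, h z.1 + g z.2 = 0) :
    h =ᵐ[μ] fun _ => -∫ y, g y ∂ν := by
  filter_upwards [Measure.ae_ae_of_ae_prod hhg] with x hx
  have hint : ∫ y, (h x + g y) ∂ν = 0 := integral_eq_zero_of_ae hx
  rw [integral_add (integrable_const _) hg, integral_const, probReal_univ, one_smul] at hint
  exact eq_neg_of_add_eq_zero_left hint

section SampledSums

variable {X E : Type*} [MeasurableSpace X] {μ : Measure X} [IsProbabilityMeasure μ]
  [NormedAddCommGroup E] [NormedSpace ℝ E] {ι : Type*} [Fintype ι]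

theorem memLp_sum_smul_comp_eval {q : ENNReal} {f : X → ℝ} (hf : MemLp f q μ) (v : ι → E) :
    MemLp (fun x : ι → X => ∑ i, f (x i) • v i) q (Measure.pi fun _ => μ) :=
  memLp_finsetSum _ fun i _ =>
    (ContinuousLinearMap.toSpanSingleton ℝ (v i)).comp_memLp'
      (hf.comp_measurePreserving (measurePreserving_eval _ i))

theorem integral_sum_smul_comp_eval [CompleteSpace E] {f : X → ℝ} (hf : Integrable f μ)
    (v : ι → E) :
    ∫ x : ι → X, ∑ i, f (x i) • v i ∂(Measure.pi fun _ => μ) = (∫ x, f x ∂μ) • ∑ i, v i := by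
  rw [integral_finsetSum _ fun i _ => (integrable_comp_eval hf).smul_const (v i),
    Finset.smul_sum]
  simp_rw [integral_smul_const, integral_comp_eval (μ := fun _ => μ) hf.aestronglyMeasurable]

theorem ae_eq_zero_of_sum_smul_comp_eval_ae_eq_zero_of_completeSpace [CompleteSpace E] {n : ℕ}
    {v : Fin n → E} (hv : ∑ i, v i ≠ 0) {f : X → ℝ} (hf : Integrable f μ)
    (h : (fun x : Fin n → X => ∑ i, f (x i) • v i) =ᵐ[Measure.pi fun _ => μ] 0) :
    f =ᵐ[μ] 0 := by
  have hmean : ∫ x, f x ∂μ = 0 := by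
    have hint := integral_sum_smul_comp_eval hf v
    rw [integral_eq_zero_of_ae h] at hint
    exact (smul_eq_zero.1 hint.symm).resolve_right hv
  obtain ⟨i₀, -, hvi₀⟩ := Finset.exists_ne_zero_of_sum_ne_zero hv
  cases n with
  | zero => exact i₀.elim0
  | succ n =>
    have hsplit := (measurePreserving_piFinSuccAbove (fun _ => μ) i₀).symm
    have hprod : ∀ᵐ z ∂μ.prod (Measure.pi fun _ : Fin n => μ),
        f z.1 • v i₀ + ∑ j, f (z.2 j) • v (i₀.succAbove j) = 0 := by
      filter_upwards [hsplit.quasiMeasurePreserving.ae h] with z hz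
      rw [← sum_smul_comp_insertNth]
      exact hz
    have hint : Integrable (fun y : Fin n → X => ∑ j, f (y j) • v (i₀.succAbove j))
        (Measure.pi fun _ => μ) :=
      integrable_finsetSum _ fun j _ => (integrable_comp_eval hf).smul_const _
    filter_upwards [ae_eq_neg_integral_of_ae_add_eq_zero (h := fun x => f x • v i₀) hint hprod]
      with x hx
    rw [integral_sum_smul_comp_eval hf, hmean, zero_smul, neg_zero] at hx
    exact (smul_eq_zero.1 hx).resolve_right hvi₀

/-- The Bochner integral vanishes on incomplete spaces, so we pass to `ℝ` through a functional
norming `∑ i, v i`. -/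
theorem ae_eq_zero_of_sum_smul_comp_eval_ae_eq_zero {n : ℕ} {v : Fin n → E} (hv : ∑ i, v i ≠ 0)
    {f : X → ℝ} (hf : Integrable f μ)
    (h : (fun x : Fin n → X => ∑ i, f (x i) • v i) =ᵐ[Measure.pi fun _ => μ] 0) :
    f =ᵐ[μ] 0 := by
  obtain ⟨φ, -, hφ⟩ := exists_dual_vector ℝ (∑ i, v i) (norm_ne_zero_iff.2 hv)
  refine ae_eq_zero_of_sum_smul_comp_eval_ae_eq_zero_of_completeSpace (v := fun i => φ (v i))
    ?_ hf ?_
  · rw [← map_sum, hφ]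
    exact_mod_cast norm_ne_zero_iff.2 hv
  · filter_upwards [h] with x hx
    simpa [map_sum] using congrArg φ hx

end SampledSums

theorem stmt13_general {X : Type*} [MeasurableSpace X] (μ : Measure X) [IsProbabilityMeasure μ]
    {E : Type*} [NormedAddCommGroup E] [NormedSpace ℝ E]
    (n : ℕ) (p : ℝ) (hp : 1 ≤ p)
    (v : Fin n → E) (hv : ∑ i, v i ≠ 0) :
    ∀ I : (X → ℝ) → ℝ,
      (∀ f : X → ℝ,
        I f = (∫ x : Fin n → X, ‖∑ i, f (x i) • v i‖ ^ p ∂(Measure.pi fun _ => μ)) ^ (1 / p)) →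
      (∀ f : X → ℝ, ∀ c : ℝ, I (fun x => c * f x) = |c| * I f) ∧
      (∀ f g : X → ℝ, Measurable f → Measurable g →
        MemLp f (ENNReal.ofReal p) μ → MemLp g (ENNReal.ofReal p) μ →
        I (f + g) ≤ I f + I g) ∧
      (∀ f : X → ℝ, Measurable f → MemLp f (ENNReal.ofReal p) μ →
        I f = 0 → f =ᵐ[μ] 0) := by
  intro I hI
  have hp0 : 0 < p := by linarith
  refine ⟨fun f c => ?_, fun f g _ _ hf hg => ?_, fun f _ hf hIf => ?_⟩
  · rw [hI, hI]
    simp_rw [mul_smul, ← Finset.smul_sum]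
    exact integral_norm_const_smul_rpow_rpow_one_div hp0 c _
  · rw [hI, hI, hI]
    simp_rw [Pi.add_apply, add_smul, Finset.sum_add_distrib]
    exact integral_norm_add_rpow_rpow_one_div_le hp (memLp_sum_smul_comp_eval hf v)
      (memLp_sum_smul_comp_eval hg v)
  · rw [hI] at hIf
    exact ae_eq_zero_of_sum_smul_comp_eval_ae_eq_zero hv
      (hf.integrable (ENNReal.one_le_ofReal.2 hp))
      (ae_eq_zero_of_integral_norm_rpow_rpow_one_div_eq_zero hp0
        (memLp_sum_smul_comp_eval hf v) hIf)

theorem stmt13 {X : Type*} [MeasurableSpace X] (μ : Measure X) [IsProbabilityMeasure μ]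
    {E : Type*} [NormedAddCommGroup E] [NormedSpace ℝ E]
    (n : ℕ) (hn : 0 < n) (p : ℝ) (hp : 1 ≤ p)
    (v : Fin n → E) (hv : ∑ i, v i ≠ 0) :
    ∀ I : (X → ℝ) → ℝ,
      (∀ f : X → ℝ,
        I f = (∫ x : Fin n → X, ‖∑ i, f (x i) • v i‖ ^ p ∂(Measure.pi fun _ => μ)) ^ (1 / p)) →
      (∀ f : X → ℝ, ∀ c : ℝ, I (fun x => c * f x) = |c| * I f) ∧
      (∀ f g : X → ℝ, Measurable f → Measurable g →
        MemLp f (ENNReal.ofReal p) μ → MemLp g (ENNReal.ofReal p) μ →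
        I (f + g) ≤ I f + I g) ∧
      (∀ f : X → ℝ, Measurable f → MemLp f (ENNReal.ofReal p) μ →
        I f = 0 → f =ᵐ[μ] 0) :=
  stmt13_general μ n p hp v hv
end

section
/- Let K be the unit cube {x ∈ ℝ^n : ‖x‖_∞ ≤ 1} and L the cross-polytope {x ∈ ℝ^n : ‖x‖_1 ≤ 1}. Then the Banach–Mazur distance satisfies d(K,L) ≥ √(n/2). -/
/-!
If `L ⊆ T K ⊆ r L`, then `T⁻¹ eₖ` lies in the cube `K`, so `1 = ⟨tₖ, T⁻¹ eₖ⟩ ≤ √n ‖tₖ‖₂` for every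
row `tₖ` of `T`. Averaging `‖T ε‖₁ ≤ r` over the vertices `ε ∈ {±1}ⁿ` of the cube and applying
Szarek's inequality `𝔼 |⟨a, ε⟩| ≥ ‖a‖₂ / √2` to each row gives `r ≥ ∑ₖ ‖tₖ‖₂ / √2 ≥ √(n / 2)`.

Szarek's inequality follows (Latała–Oleszkiewicz) from the Poincaré inequality on the discrete cube
for the even function `f ε = |⟨a, ε⟩|`: an even function has no Walsh coefficients of odd degree,
which doubles the spectral gap, while `𝔼 f² = ‖a‖₂²` and flipping `εᵢ` moves `f` by at most `2 |aᵢ|`.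
-/

open Pointwise

/-- The multiplicative Banach–Mazur distance between two subsets of `ℝ^n`. -/
noncomputable def bmDist (n : ℕ) (K L : Set (Fin n → ℝ)) : ℝ :=
  sInf {r : ℝ | 1 ≤ r ∧ ∃ T : (Fin n → ℝ) ≃ₗ[ℝ] (Fin n → ℝ), L ⊆ T '' K ∧ T '' K ⊆ r • L}

open Finset

namespace BooleanCube

variable {ι : Type*}

def sign (b : Bool) : ℝ := if b then 1 else -1

@[simp] lemma sign_mul_self (b : Bool) : sign b * sign b = 1 := by cases b <;> simp [sign]

@[simp] lemma sign_not (b : Bool) : sign (!b) = -sign b := by cases b <;> simp [sign]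

@[simp] lemma abs_sign (b : Bool) : |sign b| = 1 := by cases b <;> simp [sign]

def walsh (A : Finset ι) (σ : ι → Bool) : ℝ := ∏ i ∈ A, sign (σ i)

lemma walsh_compl (A : Finset ι) (σ : ι → Bool) : walsh A σᶜ = (-1) ^ #A * walsh A σ := by
  simp only [walsh, Pi.compl_apply, Bool.compl_eq_bnot, sign_not]
  rw [← prod_const, ← prod_mul_distrib]
  simp

section flipAt

variable [DecidableEq ι]

def flipAt (i : ι) (σ : ι → Bool) : ι → Bool := Function.update σ i (!σ i)

@[simp] lemma flipAt_apply_self (i : ι) (σ : ι → Bool) : flipAt i σ i = !σ i := by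
  simp [flipAt]

lemma flipAt_apply_of_ne {i j : ι} (σ : ι → Bool) (h : j ≠ i) : flipAt i σ j = σ j :=
  Function.update_of_ne h _ _

lemma flipAt_involutive (i : ι) : Function.Involutive (flipAt i) := by
  intro σ
  ext j
  rcases eq_or_ne j i with rfl | h
  · simp
  · rw [flipAt_apply_of_ne _ h, flipAt_apply_of_ne _ h]

lemma walsh_flipAt (i : ι) (A : Finset ι) (σ : ι → Bool) :
    walsh A (flipAt i σ) = (if i ∈ A then -1 else 1) * walsh A σ := by
  have hrest : ∀ j ∈ A.erase i, sign (flipAt i σ j) = sign (σ j) := fun j hj => by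
    rw [flipAt_apply_of_ne _ (ne_of_mem_erase hj)]
  split_ifs with h
  · rw [walsh, walsh, ← insert_erase h, prod_insert (notMem_erase i A),
      prod_insert (notMem_erase i A), prod_congr rfl hrest, flipAt_apply_self, sign_not]
    ring
  · rw [one_mul, walsh, walsh, ← erase_eq_of_notMem h, prod_congr rfl hrest]

end flipAt

variable [Fintype ι]

lemma sum_walsh_mul_walsh (σ τ : ι → Bool) :
    ∑ A, walsh A σ * walsh A τ = if σ = τ then 2 ^ Fintype.card ι else 0 := by
  have hprod : ∑ A, walsh A σ * walsh A τ = ∏ i, (sign (σ i) * sign (τ i) + 1) := by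
    simp only [prod_add_one, powerset_univ, walsh, prod_mul_distrib]
  rw [hprod]
  split_ifs with h
  · simp [h, one_add_one_eq_two]
  · obtain ⟨i, hi⟩ := Function.ne_iff.mp h
    refine prod_eq_zero (mem_univ i) ?_
    revert hi
    cases σ i <;> cases τ i <;> simp [sign]

def radSum (a : ι → ℝ) (σ : ι → Bool) : ℝ := ∑ i, a i * sign (σ i)

lemma radSum_compl (a : ι → ℝ) (σ : ι → Bool) : radSum a σᶜ = -radSum a σ := by
  simp [radSum, Bool.compl_eq_bnot]

variable [DecidableEq ι]

lemma sum_cube_const (c : ℝ) : ∑ _σ : ι → Bool, c = 2 ^ Fintype.card ι * c := by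
  simp [Finset.card_univ]

lemma sum_comp_flipAt (i : ι) (F : (ι → Bool) → ℝ) : ∑ σ, F (flipAt i σ) = ∑ σ, F σ :=
  Equiv.sum_comp ((flipAt_involutive i).toPerm _) F

lemma sum_comp_compl (F : (ι → Bool) → ℝ) : ∑ σ, F σᶜ = ∑ σ, F σ :=
  Equiv.sum_comp (compl_involutive.toPerm _) F

def coeff (f : (ι → Bool) → ℝ) (A : Finset ι) : ℝ := ∑ σ, f σ * walsh A σ

lemma sum_coeff_mul_coeff (f g : (ι → Bool) → ℝ) :
    ∑ A, coeff f A * coeff g A = 2 ^ Fintype.card ι * ∑ σ, f σ * g σ := by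
  calc ∑ A, coeff f A * coeff g A
      = ∑ A, ∑ σ, ∑ τ, f σ * g τ * (walsh A σ * walsh A τ) := by
        simp only [coeff, sum_mul_sum]
        congr! 3
        ring
    _ = ∑ σ, ∑ τ, f σ * g τ * ∑ A, walsh A σ * walsh A τ := by
        simp only [mul_sum]
        rw [sum_comm]
        exact sum_congr rfl fun σ _ => sum_comm
    _ = 2 ^ Fintype.card ι * ∑ σ, f σ * g σ := by
        simp [sum_walsh_mul_walsh, mul_sum, mul_comm]

lemma coeff_empty (f : (ι → Bool) → ℝ) : coeff f ∅ = ∑ σ, f σ := by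
  simp [coeff, walsh]

lemma coeff_sub_comp_flipAt (i : ι) (f : (ι → Bool) → ℝ) (A : Finset ι) :
    coeff (fun σ => f σ - f (flipAt i σ)) A = (if i ∈ A then 2 else 0) * coeff f A := by
  have hflip : coeff (fun σ => f (flipAt i σ)) A = (if i ∈ A then -1 else 1) * coeff f A := by
    rw [coeff, ← sum_comp_flipAt i, coeff, mul_sum]
    refine sum_congr rfl fun σ _ => ?_
    rw [flipAt_involutive i σ, walsh_flipAt]
    ring
  have hsub : coeff (fun σ => f σ - f (flipAt i σ)) A
      = coeff f A - coeff (fun σ => f (flipAt i σ)) A := by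
    simp only [coeff, ← sum_sub_distrib, sub_mul]
  rw [hsub, hflip]
  split_ifs <;> ring

lemma coeff_eq_zero_of_odd {f : (ι → Bool) → ℝ} (hf : ∀ σ, f σᶜ = f σ) {A : Finset ι}
    (hA : Odd #A) : coeff f A = 0 := by
  have h : coeff f A = -coeff f A := by
    conv_lhs => rw [coeff, ← sum_comp_compl]
    rw [coeff, ← sum_neg_distrib]
    exact sum_congr rfl fun σ _ => by rw [hf, walsh_compl, hA.neg_one_pow]; ring
  linarith

lemma sum_sq_sub_sq_sum (f : (ι → Bool) → ℝ) :
    2 ^ Fintype.card ι * ∑ σ, f σ ^ 2 - (∑ σ, f σ) ^ 2 = ∑ A, coeff f A ^ 2 - coeff f ∅ ^ 2 := by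
  simp only [sq, sum_coeff_mul_coeff, coeff_empty]

lemma sum_sum_sq_sub_comp_flipAt (f : (ι → Bool) → ℝ) :
    2 ^ Fintype.card ι * ∑ i, ∑ σ, (f σ - f (flipAt i σ)) ^ 2 = ∑ A, 4 * #A * coeff f A ^ 2 := by
  have hi : ∀ i, 2 ^ Fintype.card ι * ∑ σ, (f σ - f (flipAt i σ)) ^ 2
      = ∑ A, (if i ∈ A then 4 else 0) * coeff f A ^ 2 := fun i => by
    simp only [sq, ← sum_coeff_mul_coeff, coeff_sub_comp_flipAt]
    refine sum_congr rfl fun A _ => ?_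
    split_ifs <;> ring
  rw [mul_sum, sum_congr rfl fun i _ => hi i, sum_comm]
  refine sum_congr rfl fun A _ => ?_
  rw [← sum_mul, sum_ite_mem, univ_inter, sum_const, nsmul_eq_mul]
  ring

lemma poincare_of_comp_compl {f : (ι → Bool) → ℝ} (hf : ∀ σ, f σᶜ = f σ) :
    8 * (2 ^ Fintype.card ι * ∑ σ, f σ ^ 2 - (∑ σ, f σ) ^ 2)
      ≤ 2 ^ Fintype.card ι * ∑ i, ∑ σ, (f σ - f (flipAt i σ)) ^ 2 := by
  have hterm : ∀ A : Finset ι, 8 * coeff f A ^ 2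
      ≤ (if A = ∅ then 8 * coeff f A ^ 2 else 0) + 4 * #A * coeff f A ^ 2 := fun A => by
    split_ifs with hA
    · exact le_add_of_nonneg_right (by positivity)
    rcases Nat.even_or_odd #A with hev | hodd
    · have hA2 : 2 ≤ #A := by
        have := card_pos.mpr (nonempty_iff_ne_empty.mpr hA)
        obtain ⟨k, hk⟩ := hev
        omega
      have : (2 : ℝ) ≤ #A := by exact_mod_cast hA2
      nlinarith [sq_nonneg (coeff f A)]
    · simp [coeff_eq_zero_of_odd hf hodd]
  have hsum := sum_le_sum fun A (_ : A ∈ univ) => hterm A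
  rw [sum_add_distrib, sum_ite_eq' univ ∅, if_pos (mem_univ _), ← mul_sum] at hsum
  rw [sum_sq_sub_sq_sum, sum_sum_sq_sub_comp_flipAt]
  linarith

lemma radSum_sub_radSum_flipAt (a : ι → ℝ) (i : ι) (σ : ι → Bool) :
    radSum a σ - radSum a (flipAt i σ) = 2 * a i * sign (σ i) := by
  rw [radSum, radSum, ← sum_sub_distrib, sum_eq_single i]
  · rw [flipAt_apply_self, sign_not]
    ring
  · intro j _ hj
    rw [flipAt_apply_of_ne _ hj, sub_self]
  · exact fun h => absurd (mem_univ i) h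

lemma sum_sign_mul_sign (i j : ι) :
    ∑ σ : ι → Bool, sign (σ i) * sign (σ j) = if i = j then 2 ^ Fintype.card ι else 0 := by
  split_ifs with hij
  · simp [hij]
  · have hanti : ∑ σ : ι → Bool, sign (flipAt i σ i) * sign (flipAt i σ j)
        = -∑ σ : ι → Bool, sign (σ i) * sign (σ j) := by
      rw [← sum_neg_distrib]
      refine sum_congr rfl fun σ _ => ?_
      rw [flipAt_apply_self, flipAt_apply_of_ne _ (Ne.symm hij), sign_not, neg_mul]
    rw [sum_comp_flipAt i fun σ => sign (σ i) * sign (σ j)] at hanti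
    linarith

lemma sum_radSum_sq (a : ι → ℝ) :
    ∑ σ, radSum a σ ^ 2 = 2 ^ Fintype.card ι * ∑ i, a i ^ 2 := by
  calc ∑ σ, radSum a σ ^ 2
      = ∑ σ : ι → Bool, ∑ i, ∑ j, a i * a j * (sign (σ i) * sign (σ j)) := by
        simp only [radSum, sq, sum_mul_sum]
        congr! 3
        ring
    _ = ∑ i, ∑ j, a i * a j * ∑ σ : ι → Bool, sign (σ i) * sign (σ j) := by
        simp only [mul_sum]
        rw [sum_comm]
        exact sum_congr rfl fun i _ => sum_comm
    _ = 2 ^ Fintype.card ι * ∑ i, a i ^ 2 := by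
        simp [sum_sign_mul_sign, mul_sum, sq, mul_comm]

lemma sum_sum_sq_sub_abs_radSum_flipAt_le (a : ι → ℝ) :
    ∑ i, ∑ σ, (|radSum a σ| - |radSum a (flipAt i σ)|) ^ 2
      ≤ 2 ^ Fintype.card ι * (4 * ∑ i, a i ^ 2) := by
  have hterm : ∀ i σ, (|radSum a σ| - |radSum a (flipAt i σ)|) ^ 2 ≤ 4 * a i ^ 2 := by
    intro i σ
    calc (|radSum a σ| - |radSum a (flipAt i σ)|) ^ 2
        ≤ (radSum a σ - radSum a (flipAt i σ)) ^ 2 :=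
          sq_le_sq.mpr (by simpa using abs_abs_sub_abs_le_abs_sub _ _)
      _ = 4 * a i ^ 2 := by
          rw [radSum_sub_radSum_flipAt]
          linear_combination 4 * a i ^ 2 * sign_mul_self (σ i)
  calc ∑ i, ∑ σ, (|radSum a σ| - |radSum a (flipAt i σ)|) ^ 2
      ≤ ∑ i, ∑ _σ : ι → Bool, 4 * a i ^ 2 := sum_le_sum fun i _ => sum_le_sum fun σ _ => hterm i σ
    _ = 2 ^ Fintype.card ι * (4 * ∑ i, a i ^ 2) := by simp only [sum_cube_const, mul_sum]

theorem szarek_inequality (a : ι → ℝ) :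
    2 ^ Fintype.card ι * √((∑ i, a i ^ 2) / 2) ≤ ∑ σ, |radSum a σ| := by
  have hpoincare := poincare_of_comp_compl (f := fun σ => |radSum a σ|)
    fun σ => by rw [radSum_compl, abs_neg]
  have hgrad := sum_sum_sq_sub_abs_radSum_flipAt_le a
  simp only [sq_abs, sum_radSum_sq] at hpoincare
  have hsq : (2 ^ Fintype.card ι * √((∑ i, a i ^ 2) / 2)) ^ 2 ≤ (∑ σ, |radSum a σ|) ^ 2 := by
    rw [mul_pow, Real.sq_sqrt (by positivity)]
    nlinarith [pow_pos (two_pos : (0 : ℝ) < 2) (Fintype.card ι)]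
  exact le_of_sq_le_sq hsq (by positivity)

end BooleanCube

section BanachMazur

open BooleanCube Matrix

variable {ι κ : Type*} [Fintype ι]

lemma crossPolytope_subset_cube : {x : ι → ℝ | ∑ i, |x i| ≤ 1} ⊆ {x | ∀ i, |x i| ≤ 1} :=
  fun x hx i => (single_le_sum (fun j _ => abs_nonneg (x j)) (mem_univ i)).trans hx

lemma mem_smul_crossPolytope_iff {r : ℝ} (hr : 0 < r) (y : ι → ℝ) :
    y ∈ r • {x : ι → ℝ | ∑ i, |x i| ≤ 1} ↔ ∑ i, |y i| ≤ r := by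
  rw [Set.mem_smul_set_iff_inv_smul_mem₀ hr.ne']
  simp [abs_mul, abs_of_pos hr, ← mul_sum, inv_mul_le_iff₀ hr]

lemma sum_abs_le_card_of_mem_cube {x : ι → ℝ} (hx : ∀ i, |x i| ≤ 1) :
    ∑ i, |x i| ≤ Fintype.card ι := by
  simpa using sum_le_sum fun i (_ : i ∈ univ) => hx i

lemma one_le_card_mul_sum_sq_of_mulVec_eq_one (M : Matrix κ ι ℝ) {x : ι → ℝ}
    (hx : ∀ i, |x i| ≤ 1) {k : κ} (hMx : (M *ᵥ x) k = 1) :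
    1 ≤ Fintype.card ι * ∑ j, M k j ^ 2 := by
  have hx2 : ∑ j, x j ^ 2 ≤ Fintype.card ι := by
    simpa using sum_le_sum fun j (_ : j ∈ univ) => (sq_le_one_iff_abs_le_one (x j)).mpr (hx j)
  have hdot : ∑ j, M k j * x j = 1 := hMx
  calc 1 = (∑ j, M k j * x j) ^ 2 := by rw [hdot, one_pow]
    _ ≤ (∑ j, M k j ^ 2) * ∑ j, x j ^ 2 := sum_mul_sq_le_sq_mul_sq _ _ _
    _ ≤ Fintype.card ι * ∑ j, M k j ^ 2 := by
        rw [mul_comm]; exact mul_le_mul_of_nonneg_right hx2 (by positivity)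

lemma sqrt_card_div_two_le_sum_sqrt [Fintype κ] {S : κ → ℝ} (h : ∀ k, 1 ≤ Fintype.card κ * S k) :
    √(Fintype.card κ / 2) ≤ ∑ k, √(S k / 2) := by
  rcases isEmpty_or_nonempty κ with hκ | hκ
  · simp
  have hc : (0 : ℝ) < Fintype.card κ := by exact_mod_cast Fintype.card_pos
  calc √(Fintype.card κ / 2) = ∑ _k : κ, √(1 / (2 * Fintype.card κ)) := by
        rw [sum_const, card_univ, nsmul_eq_mul, ← Real.sqrt_sq hc.le, ← Real.sqrt_mul (sq_nonneg _),
          Real.sqrt_sq hc.le]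
        congr 1
        field_simp
    _ ≤ ∑ k, √(S k / 2) := sum_le_sum fun k _ => Real.sqrt_le_sqrt <| by
        rw [div_le_div_iff₀ (by positivity) two_pos]
        linarith [h k]

lemma exists_sum_sqrt_le_sum_abs_mulVec [DecidableEq ι] [Fintype κ] (M : Matrix κ ι ℝ) :
    ∃ σ : ι → Bool, ∑ k, √((∑ j, M k j ^ 2) / 2) ≤ ∑ k, |(M *ᵥ fun i => sign (σ i)) k| := by
  obtain ⟨σ, -, hσ⟩ := exists_le_of_sum_le univ_nonempty <|
    calc ∑ _σ : ι → Bool, ∑ k, √((∑ j, M k j ^ 2) / 2)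
        = ∑ k, 2 ^ Fintype.card ι * √((∑ j, M k j ^ 2) / 2) := by rw [sum_cube_const, mul_sum]
      _ ≤ ∑ k, ∑ σ, |radSum (M k) σ| := sum_le_sum fun k _ => szarek_inequality (M k)
      _ = ∑ σ : ι → Bool, ∑ k, |(M *ᵥ fun i => sign (σ i)) k| := sum_comm
  exact ⟨σ, hσ⟩

end BanachMazur

open BooleanCube Matrix

theorem stmt18_general (n : ℕ) :
    Real.sqrt ((n : ℝ) / 2) ≤
      bmDist n {x : Fin n → ℝ | ∀ i, |x i| ≤ 1} {x : Fin n → ℝ | ∑ i, |x i| ≤ 1} := by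
  have hn1 : (0 : ℝ) < n + 1 := by positivity
  refine le_csInf ⟨n + 1, by linarith, LinearEquiv.refl ℝ _, ?_, ?_⟩ ?_
  · exact fun x hx => ⟨x, crossPolytope_subset_cube hx, rfl⟩
  · rintro _ ⟨x, hx, rfl⟩
    rw [mem_smul_crossPolytope_iff hn1]
    simpa using (sum_abs_le_card_of_mem_cube hx).trans (by simp)
  rintro r ⟨hr, T, hLT, hTK⟩
  set M := LinearMap.toMatrix' T.toLinearMap
  have hM : ∀ x, M *ᵥ x = T x := LinearMap.toMatrix'_mulVec _
  have hrow : ∀ k, 1 ≤ Fintype.card (Fin n) * ∑ j, M k j ^ 2 := fun k => by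
    obtain ⟨x, hx, hTx⟩ := hLT (show Pi.single k 1 ∈ _ by simp [Pi.single_apply, apply_ite])
    exact one_le_card_mul_sum_sq_of_mulVec_eq_one M hx (by simp [hM, hTx])
  obtain ⟨σ, hσ⟩ := exists_sum_sqrt_le_sum_abs_mulVec M
  calc √(n / 2) ≤ ∑ k, √((∑ j, M k j ^ 2) / 2) := by
        simpa using sqrt_card_div_two_le_sum_sqrt hrow
    _ ≤ ∑ k, |(M *ᵥ fun i => sign (σ i)) k| := hσ
    _ ≤ r := by
        rw [hM, ← mem_smul_crossPolytope_iff (one_pos.trans_le hr)]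
        exact hTK ⟨_, fun i => (abs_sign (σ i)).le, rfl⟩

theorem stmt18 (n : ℕ) (hn : 0 < n) :
    Real.sqrt ((n : ℝ) / 2) ≤
      bmDist n {x : Fin n → ℝ | ∀ i, |x i| ≤ 1} {x : Fin n → ℝ | ∑ i, |x i| ≤ 1} :=
  stmt18_general n
end
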